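/- If E is a right Hilbert A-module whose identity operator is compact (id_E ∈ K(E)), then E is finitely generated projective: E is a direct summand of a finite direct sum of representable modules ⊕_{i=1}^n h_{x_i}. Conversely, if A is unital, every finitely generated projective module has compact identity. -/

import Mathlib

universe u u' v v'

open Filter Topology

/-- A (possibly non-unital) C*-category structure on a family of hom-spaces:
a category enriched in complex Banach spaces, with contractive composition and a
conjugate-linear involution satisfying the C*-identity and positivity of elements
of the form `a* ∘ a` (encoded via self-adjoint square roots). -/
class CStarCategory {Obj : Type u} (Hom : Obj → Obj → Type v)
    [∀ x y, NormedAddCommGroup (Hom x y)] [∀ x y, NormedSpace ℂ (Hom x y)]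
    [∀ x y, CompleteSpace (Hom x y)] : Type (max u v) where
  comp : ∀ {x y z : Obj}, Hom y z → Hom x y → Hom x z
  adj : ∀ {x y : Obj}, Hom x y → Hom y x
  comp_assoc : ∀ {w x y z : Obj} (f : Hom y z) (g : Hom x y) (h : Hom w x),
      comp (comp f g) h = comp f (comp g h)
  comp_add_left : ∀ {x y z : Obj} (f f' : Hom y z) (g : Hom x y),
      comp (f + f') g = comp f g + comp f' g
  comp_add_right : ∀ {x y z : Obj} (f : Hom y z) (g g' : Hom x y),
      comp f (g + g') = comp f g + comp f g'
  comp_smul_left : ∀ {x y z : Obj} (c : ℂ) (f : Hom y z) (g : Hom x y),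
      comp (c • f) g = c • comp f g
  comp_smul_right : ∀ {x y z : Obj} (c : ℂ) (f : Hom y z) (g : Hom x y),
      comp f (c • g) = c • comp f g
  norm_comp_le : ∀ {x y z : Obj} (f : Hom y z) (g : Hom x y), ‖comp f g‖ ≤ ‖f‖ * ‖g‖
  adj_adj : ∀ {x y : Obj} (f : Hom x y), adj (adj f) = f
  adj_add : ∀ {x y : Obj} (f g : Hom x y), adj (f + g) = adj f + adj g
  adj_smul : ∀ {x y : Obj} (c : ℂ) (f : Hom x y), adj (c • f) = (starRingEnd ℂ) c • adj f
  adj_comp : ∀ {x y z : Obj} (f : Hom y z) (g : Hom x y), adj (comp f g) = comp (adj g) (adj f)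
  norm_adj_comp_self : ∀ {x y : Obj} (a : Hom x y), ‖comp (adj a) a‖ = ‖a‖ * ‖a‖
  pos_adj_comp_self : ∀ {x y : Obj} (a : Hom x y),
      ∃ b : Hom x x, adj b = b ∧ comp (adj a) a = comp b b

infixl:70 " ⊛ " => CStarCategory.comp
postfix:max "†" => CStarCategory.adj

section CStarBasics

variable {Obj : Type u} {Hom : Obj → Obj → Type v}
  [∀ x y, NormedAddCommGroup (Hom x y)] [∀ x y, NormedSpace ℂ (Hom x y)]
  [∀ x y, CompleteSpace (Hom x y)] [CStarCategory Hom]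

/-- Positivity of an endomorphism in a C*-category: it is of the form `b* ∘ b`. -/
def IsPos {x : Obj} (s : Hom x x) : Prop :=
  ∃ (z : Obj) (b : Hom x z), s = (b†) ⊛ b

/-- An approximate unit for the C*-algebra `Hom x x`: a directed net of positive,
norm-bounded, increasing elements with `‖e_i ∘ c - c‖ → 0` for every `c`. -/
structure IsApproxUnit {ι : Type u'} [Preorder ι] {x : Obj} (e : ι → Hom x x) : Prop where
  nonempty : Nonempty ι
  directed : ∀ i j : ι, ∃ k, i ≤ k ∧ j ≤ k
  norm_le_one : ∀ i, ‖e i‖ ≤ 1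
  pos : ∀ i, IsPos (e i)
  mono : ∀ i j, i ≤ j → IsPos (e j - e i)
  tendsto : ∀ c : Hom x x, Tendsto (fun i => ‖(e i ⊛ c) - c‖) atTop (nhds 0)

end CStarBasics

/-- Unitality, as a property of a C*-category. -/
def IsUnitalCStarCat {Obj : Type u} (Hom : Obj → Obj → Type v)
    [∀ x y, NormedAddCommGroup (Hom x y)] [∀ x y, NormedSpace ℂ (Hom x y)]
    [∀ x y, CompleteSpace (Hom x y)] [CStarCategory Hom] : Prop :=
  ∀ x : Obj, ∃ e : Hom x x,
    (∀ {y : Obj} (a : Hom y x), e ⊛ a = a) ∧ (∀ {y : Obj} (b : Hom x y), b ⊛ e = b)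

/-- A right Hilbert module over a C*-category: a ℂ-linear functor into vector spaces
equipped with `Hom`-valued inner products; each fiber is a Banach space whose norm is
induced by the inner product. -/
structure HilbMod {Obj : Type u} (Hom : Obj → Obj → Type v)
    [∀ x y, NormedAddCommGroup (Hom x y)] [∀ x y, NormedSpace ℂ (Hom x y)]
    [∀ x y, CompleteSpace (Hom x y)] [CStarCategory Hom] : Type (max u (v + 1)) where
  carrier : Obj → Type v
  [nacg : ∀ x, NormedAddCommGroup (carrier x)]
  [nsp : ∀ x, NormedSpace ℂ (carrier x)]
  [cs : ∀ x, CompleteSpace (carrier x)]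
  smulA : ∀ {x w : Obj}, carrier x → Hom w x → carrier w
  inner : ∀ {y z : Obj}, carrier z → carrier y → Hom y z
  smulA_add_left : ∀ {x w : Obj} (e e' : carrier x) (a : Hom w x),
      smulA (e + e') a = smulA e a + smulA e' a
  smulA_add_right : ∀ {x w : Obj} (e : carrier x) (a a' : Hom w x),
      smulA e (a + a') = smulA e a + smulA e a'
  smulA_smul_left : ∀ {x w : Obj} (c : ℂ) (e : carrier x) (a : Hom w x),
      smulA (c • e) a = c • smulA e a
  smulA_smul_right : ∀ {x w : Obj} (c : ℂ) (e : carrier x) (a : Hom w x),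
      smulA e (c • a) = c • smulA e a
  smulA_comp : ∀ {x w v : Obj} (e : carrier x) (a : Hom w x) (b : Hom v w),
      smulA (smulA e a) b = smulA e (a ⊛ b)
  inner_add_left : ∀ {y z : Obj} (e e' : carrier z) (f : carrier y),
      inner (e + e') f = inner e f + inner e' f
  inner_add_right : ∀ {y z : Obj} (e : carrier z) (f f' : carrier y),
      inner e (f + f') = inner e f + inner e f'
  inner_smul_right : ∀ {y z : Obj} (c : ℂ) (e : carrier z) (f : carrier y),
      inner e (c • f) = c • inner e f
  adj_inner : ∀ {y z : Obj} (e : carrier z) (f : carrier y), (inner e f)† = inner f e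
  inner_smulA : ∀ {y z w : Obj} (e : carrier z) (f : carrier y) (a : Hom w y),
      inner e (smulA f a) = inner e f ⊛ a
  inner_self_pos : ∀ {x : Obj} (e : carrier x), ∃ (z : Obj) (b : Hom x z),
      inner e e = (b†) ⊛ b
  inner_self_eq_zero : ∀ {x : Obj} (e : carrier x), inner e e = 0 → e = 0
  norm_eq : ∀ {x : Obj} (e : carrier x), ‖e‖ = Real.sqrt ‖inner e e‖

attribute [instance] HilbMod.nacg HilbMod.nsp HilbMod.cs

section HilbModBasics

variable {Obj : Type u} {Hom : Obj → Obj → Type v}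
  [∀ x y, NormedAddCommGroup (Hom x y)] [∀ x y, NormedSpace ℂ (Hom x y)]
  [∀ x y, CompleteSpace (Hom x y)] [CStarCategory Hom]

theorem HilbMod.inner_zero_left (M : HilbMod Hom) {y z : Obj} (f : M.carrier y) :
    M.inner (0 : M.carrier z) f = 0 := by
  have h := M.inner_add_left (0 : M.carrier z) 0 f
  rw [add_zero] at h
  exact left_eq_add.mp h

theorem HilbMod.inner_zero_right (M : HilbMod Hom) {y z : Obj} (e : M.carrier z) :
    M.inner e (0 : M.carrier y) = 0 := by
  have h := M.inner_add_right e (0 : M.carrier y) 0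
  rw [add_zero] at h
  exact left_eq_add.mp h

theorem HilbMod.inner_smul_left (M : HilbMod Hom) {y z : Obj} (c : ℂ)
    (e : M.carrier z) (f : M.carrier y) :
    M.inner (c • e) f = (starRingEnd ℂ) c • M.inner e f := by
  have h : M.inner (c • e) f = (M.inner f (c • e))† := (M.adj_inner f (c • e)).symm
  rw [h, M.inner_smul_right, CStarCategory.adj_smul, M.adj_inner]

theorem HilbMod.inner_smulA_left (M : HilbMod Hom) {x y w : Obj}
    (f : M.carrier x) (a : Hom w x) (g : M.carrier y) :
    M.inner (M.smulA f a) g = (a†) ⊛ M.inner f g := by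
  have h : M.inner (M.smulA f a) g = (M.inner g (M.smulA f a))† :=
    (M.adj_inner g (M.smulA f a)).symm
  rw [h, M.inner_smulA, CStarCategory.adj_comp, M.adj_inner]

/-- A bounded adjointable operator between Hilbert modules over a C*-category,
encoded by a pair of adjoint maps. -/
structure HilbOp (M N : HilbMod Hom) : Type (max u v) where
  toFun : ∀ x, M.carrier x → N.carrier x
  adjFun : ∀ x, N.carrier x → M.carrier x
  adjoint_prop : ∀ {y z : Obj} (e : M.carrier z) (f : N.carrier y),
      N.inner (toFun z e) f = M.inner e (adjFun y f)

variable {M N P : HilbMod Hom}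

theorem HilbOp.ext' {T S : HilbOp M N} (h1 : ∀ z v, T.toFun z v = S.toFun z v)
    (h2 : ∀ z w, T.adjFun z w = S.adjFun z w) : T = S := by
  cases T with
  | mk tf af ap =>
    cases S with
    | mk tf' af' ap' =>
      have e1 : tf = tf' := funext fun z => funext fun v => h1 z v
      subst e1
      have e2 : af = af' := funext fun z => funext fun w => h2 z w
      subst e2
      rfl

/-- Composition of operators. -/
def HilbOp.comp (S : HilbOp N P) (T : HilbOp M N) : HilbOp M P where
  toFun z v := S.toFun z (T.toFun z v)
  adjFun z w := T.adjFun z (S.adjFun z w)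
  adjoint_prop e f := by rw [S.adjoint_prop, T.adjoint_prop]

/-- The identity operator. -/
def HilbOp.id (M : HilbMod Hom) : HilbOp M M where
  toFun _ v := v
  adjFun _ v := v
  adjoint_prop _ _ := rfl

/-- Adjoint (involution) of an operator. -/
def HilbOp.star (T : HilbOp M N) : HilbOp N M where
  toFun := T.adjFun
  adjFun := T.toFun
  adjoint_prop e f := by
    have h := congrArg CStarCategory.adj (T.adjoint_prop f e)
    rw [N.adj_inner, M.adj_inner] at h
    exact h.symm

instance : Zero (HilbOp M N) :=
  ⟨{ toFun := fun _ _ => 0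
     adjFun := fun _ _ => 0
     adjoint_prop := fun e f => by
       rw [HilbMod.inner_zero_left, HilbMod.inner_zero_right] }⟩

instance : Add (HilbOp M N) :=
  ⟨fun T S =>
    { toFun := fun z v => T.toFun z v + S.toFun z v
      adjFun := fun z w => T.adjFun z w + S.adjFun z w
      adjoint_prop := fun e f => by
        rw [N.inner_add_left, M.inner_add_right, T.adjoint_prop, S.adjoint_prop] }⟩

instance : SMul ℂ (HilbOp M N) :=
  ⟨fun c T =>
    { toFun := fun z v => c • T.toFun z v
      adjFun := fun z w => (starRingEnd ℂ) c • T.adjFun z w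
      adjoint_prop := fun e f => by
        rw [HilbMod.inner_smul_left, M.inner_smul_right, T.adjoint_prop] }⟩

instance : AddCommMonoid (HilbOp M N) where
  add_assoc T S R := HilbOp.ext' (fun z v => add_assoc _ _ _) (fun z w => add_assoc _ _ _)
  zero_add T := HilbOp.ext' (fun z v => zero_add _) (fun z w => zero_add _)
  add_zero T := HilbOp.ext' (fun z v => add_zero _) (fun z w => add_zero _)
  add_comm T S := HilbOp.ext' (fun z v => add_comm _ _) (fun z w => add_comm _ _)
  nsmul := nsmulRec

/-- The operator norm of an operator between Hilbert modules. -/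
noncomputable def opNorm (T : HilbOp M N) : ℝ :=
  sInf {C : ℝ | 0 ≤ C ∧ ∀ (z : Obj) (v : M.carrier z), ‖T.toFun z v‖ ≤ C * ‖v‖}

/-- The rank-one operator `θ^{f,e} : v ↦ f·⟨e,v⟩`. -/
def thetaOp {x : Obj} (f : N.carrier x) (e : M.carrier x) : HilbOp M N where
  toFun z v := N.smulA f (M.inner e v)
  adjFun z w := M.smulA e (N.inner f w)
  adjoint_prop v w := by
    rw [HilbMod.inner_smulA_left, M.adj_inner, M.inner_smulA]

/-- Compact operators: norm-limits of finite sums of rank-one operators. -/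
def IsCompactOp (T : HilbOp M N) : Prop :=
  ∀ ε : ℝ, 0 < ε → ∃ (n : ℕ) (w : Fin n → Obj) (f : ∀ i, N.carrier (w i))
    (e : ∀ i, M.carrier (w i)), ∀ (z : Obj) (v : M.carrier z),
      ‖T.toFun z v - ∑ i, N.smulA (f i) (M.inner (e i) v)‖ ≤ ε * ‖v‖

end HilbModBasics

/-- The representable right Hilbert module `h_x = Hom(-, x)`. -/
def repMod {Obj : Type u} (Hom : Obj → Obj → Type v)
    [∀ x y, NormedAddCommGroup (Hom x y)] [∀ x y, NormedSpace ℂ (Hom x y)]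
    [∀ x y, CompleteSpace (Hom x y)] [CStarCategory Hom] (x : Obj) : HilbMod Hom where
  carrier z := Hom z x
  smulA e a := e ⊛ a
  inner e f := (e†) ⊛ f
  smulA_add_left e e' a := CStarCategory.comp_add_left e e' a
  smulA_add_right e a a' := CStarCategory.comp_add_right e a a'
  smulA_smul_left c e a := CStarCategory.comp_smul_left c e a
  smulA_smul_right c e a := CStarCategory.comp_smul_right c e a
  smulA_comp e a b := CStarCategory.comp_assoc e a b
  inner_add_left e e' f := by
    show ((e + e')†) ⊛ f = ((e†) ⊛ f) + ((e'†) ⊛ f)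
    rw [CStarCategory.adj_add, CStarCategory.comp_add_left]
  inner_add_right e f f' := CStarCategory.comp_add_right _ f f'
  inner_smul_right c e f := CStarCategory.comp_smul_right c _ f
  adj_inner e f := by rw [CStarCategory.adj_comp, CStarCategory.adj_adj]
  inner_smulA e f a := (CStarCategory.comp_assoc _ f a).symm
  inner_self_pos e := ⟨x, e, rfl⟩
  inner_self_eq_zero := by
    intro z e h
    have h' : (e†) ⊛ e = 0 := h
    have h2 := CStarCategory.norm_adj_comp_self (Hom := Hom) e
    rw [h', norm_zero] at h2
    have h3 : ‖e‖ = 0 := by nlinarith [norm_nonneg e]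
    exact norm_eq_zero.mp h3
  norm_eq := by
    intro z e
    rw [CStarCategory.norm_adj_comp_self, Real.sqrt_mul_self (norm_nonneg e)]

section YonedaOps

variable {Obj : Type u} {Hom : Obj → Obj → Type v}
  [∀ x y, NormedAddCommGroup (Hom x y)] [∀ x y, NormedSpace ℂ (Hom x y)]
  [∀ x y, CompleteSpace (Hom x y)] [CStarCategory Hom]

/-- The operator `ε_m : h_x → M` sending `a` to `m·a`; its adjoint is `f ↦ ⟨m,f⟩`. -/
def epsOp {M : HilbMod Hom} {x : Obj} (m : M.carrier x) : HilbOp (repMod Hom x) M where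
  toFun z a := M.smulA m a
  adjFun z f := M.inner m f
  adjoint_prop a f := HilbMod.inner_smulA_left M m a f

/-- The Yoneda operator `h_x → h_y` given by postcomposition with `a : Hom x y`. -/
def yonedaOp {x y : Obj} (a : Hom x y) : HilbOp (repMod Hom x) (repMod Hom y) where
  toFun z b := a ⊛ b
  adjFun z c := (a†) ⊛ c
  adjoint_prop b c := by
    show ((a ⊛ b)†) ⊛ c = (b†) ⊛ ((a†) ⊛ c)
    exact (congrArg (fun t => t ⊛ c) (CStarCategory.adj_comp a b)).trans
      (CStarCategory.comp_assoc _ _ _)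

end YonedaOps

/-! If `‖id - T‖ ≤ 1/2` for a finite sum `T = ∑ θ^{f_i,e_i}` of rank-one operators, the Neumann
series provides `S` with `T S = id`, hence `id = ∑ θ^{f_i, S* e_i}`; and `θ^{f,e}` factors through
`h_x` as `ε_f ε_e*`. The adjoint of the Neumann series exists because the inner product is
continuous, by the Cauchy–Schwarz inequality for Hilbert C*-modules applied fibrewise.
Conversely, if `u_i` is the unit of `x_i`, each `V_i U_i` is the rank-one operator
`θ^{V_i u_i, U_i* u_i}`, so the identity is itself a finite sum of rank-one operators. -/

section CStarCategoryLemmas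

variable {Obj : Type u} {Hom : Obj → Obj → Type v}
  [∀ x y, NormedAddCommGroup (Hom x y)] [∀ x y, NormedSpace ℂ (Hom x y)]
  [∀ x y, CompleteSpace (Hom x y)] [CStarCategory Hom]

namespace CStarCategory

theorem comp_zero {x y z : Obj} (f : Hom y z) : f ⊛ (0 : Hom x y) = 0 :=
  (AddMonoidHom.mk' (comp f) (comp_add_right f)).map_zero

theorem zero_comp {x y z : Obj} (g : Hom x y) : (0 : Hom y z) ⊛ g = 0 :=
  (AddMonoidHom.mk' (comp · g) (comp_add_left · · g)).map_zero

theorem norm_adj {x y : Obj} (a : Hom x y) : ‖a†‖ = ‖a‖ := by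
  have le_norm_adj : ∀ {x y : Obj} (b : Hom x y), ‖b‖ ≤ ‖b†‖ := fun b => by
    have h := norm_adj_comp_self b
    have h' := norm_comp_le (b†) b
    nlinarith [norm_nonneg b, norm_nonneg (b†)]
  refine le_antisymm ?_ (le_norm_adj a)
  simpa only [adj_adj] using le_norm_adj (a†)

theorem adj_eq_self_of_right_unit {x : Obj} {u : Hom x x}
    (hu : ∀ {y : Obj} (b : Hom x y), b ⊛ u = b) : u† = u := by
  have h : u† ⊛ u = u† := hu (u†)
  calc u† = u† ⊛ u := h.symm
    _ = (u† ⊛ u)† := by rw [adj_comp, adj_adj]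
    _ = u := by rw [h, adj_adj]

end CStarCategory

variable (Hom) in
def EndAlg (x : Obj) : Type v := Hom x x

namespace EndAlg

variable {x : Obj}

instance : NormedAddCommGroup (EndAlg Hom x) := inferInstanceAs (NormedAddCommGroup (Hom x x))

instance : NormedSpace ℂ (EndAlg Hom x) := inferInstanceAs (NormedSpace ℂ (Hom x x))

instance : CompleteSpace (EndAlg Hom x) := inferInstanceAs (CompleteSpace (Hom x x))

noncomputable instance : NonUnitalNormedRing (EndAlg Hom x) where
  dist_eq := NormedAddCommGroup.dist_eq (E := Hom x x)
  mul a b := (a : Hom x x) ⊛ (b : Hom x x)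
  left_distrib := CStarCategory.comp_add_right (Hom := Hom)
  right_distrib := CStarCategory.comp_add_left (Hom := Hom)
  zero_mul := CStarCategory.zero_comp (Hom := Hom)
  mul_zero := CStarCategory.comp_zero (Hom := Hom)
  mul_assoc := CStarCategory.comp_assoc (Hom := Hom)
  norm_mul_le := CStarCategory.norm_comp_le (Hom := Hom)

noncomputable instance : StarRing (EndAlg Hom x) where
  star a := (a : Hom x x)†
  star_involutive := CStarCategory.adj_adj (Hom := Hom)
  star_mul := CStarCategory.adj_comp (Hom := Hom)
  star_add := CStarCategory.adj_add (Hom := Hom)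

noncomputable instance : NonUnitalCStarAlgebra (EndAlg Hom x) where
  norm_mul_self_le a := (CStarCategory.norm_adj_comp_self (a : Hom x x)).ge
  smul_assoc := CStarCategory.comp_smul_left (Hom := Hom)
  smul_comm c a b := (CStarCategory.comp_smul_right c a b).symm
  star_smul := CStarCategory.adj_smul (Hom := Hom)

end EndAlg

end CStarCategoryLemmas

namespace HilbMod

variable {Obj : Type u} {Hom : Obj → Obj → Type v}
  [∀ x y, NormedAddCommGroup (Hom x y)] [∀ x y, NormedSpace ℂ (Hom x y)]
  [∀ x y, CompleteSpace (Hom x y)] [CStarCategory Hom] (M : HilbMod Hom)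

@[simps]
def innerLeft {y z : Obj} (f : M.carrier y) : M.carrier z →+ Hom y z where
  toFun e := M.inner e f
  map_zero' := M.inner_zero_left f
  map_add' e e' := M.inner_add_left e e' f

@[simps]
def innerRight {y z : Obj} (e : M.carrier z) : M.carrier y →+ Hom y z where
  toFun := M.inner e
  map_zero' := M.inner_zero_right e
  map_add' := M.inner_add_right e

theorem inner_sub_right {y z : Obj} (e : M.carrier z) (f f' : M.carrier y) :
    M.inner e (f - f') = M.inner e f - M.inner e f' :=
  (M.innerRight e).map_sub f f'

theorem ext_inner {x : Obj} {d d' : M.carrier x}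
    (h : ∀ u : M.carrier x, M.inner u d = M.inner u d') : d = d' := by
  rw [← sub_eq_zero]
  exact M.inner_self_eq_zero _ (by rw [inner_sub_right, h, sub_self])

theorem norm_inner_self {x : Obj} (e : M.carrier x) : ‖M.inner e e‖ = ‖e‖ ^ 2 := by
  rw [M.norm_eq e, Real.sq_sqrt (norm_nonneg _)]

open MulOpposite in
/-- Mathlib's Hilbert C*-modules carry a left action with `⟪e, a • f⟫ = a * ⟪e, f⟫`, so the fibre
`M.carrier x` is one over the opposite algebra `(Hom x x)ᵐᵒᵖ`. -/
theorem norm_inner_le_of_same {x : Obj} (e f : M.carrier x) :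
    ‖M.inner e f‖ ≤ ‖e‖ * ‖f‖ := by
  let _ : PartialOrder (EndAlg Hom x)ᵐᵒᵖ := CStarAlgebra.spectralOrder _
  have _ : StarOrderedRing (EndAlg Hom x)ᵐᵒᵖ := CStarAlgebra.spectralOrderedRing _
  let _ : SMul (EndAlg Hom x)ᵐᵒᵖ (M.carrier x) := ⟨fun a e => M.smulA e a.unop⟩
  let _ : CStarModule (EndAlg Hom x)ᵐᵒᵖ (M.carrier x) :=
    { inner e f := op (α := EndAlg Hom x) (M.inner e f)
      inner_add_right := congrArg op (M.inner_add_right _ _ _)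
      inner_self_nonneg {e} := by
        obtain ⟨z, b, hb⟩ := M.inner_self_pos e
        obtain ⟨c, hc, hbc⟩ := CStarCategory.pos_adj_comp_self b
        convert star_mul_self_nonneg (op (α := EndAlg Hom x) c) using 1
        change op (M.inner e e) = op (c ⊛ c†)
        rw [hb, hbc, hc]
      inner_self := ⟨fun h => M.inner_self_eq_zero _ (op_injective h),
        fun h => congrArg op (h ▸ M.inner_zero_left _)⟩
      inner_op_smul_right {a} := congrArg op (M.inner_smulA _ _ a.unop)
      inner_smul_right_complex := congrArg op (M.inner_smul_right _ _ _)
      star_inner e f := congrArg op (M.adj_inner e f)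
      norm_eq_sqrt_norm_inner_self := M.norm_eq }
  exact CStarModule.norm_inner_le (A := (EndAlg Hom x)ᵐᵒᵖ) (M.carrier x) (x := e) (y := f)

theorem norm_smulA_le {x w : Obj} (e : M.carrier x) (a : Hom w x) :
    ‖M.smulA e a‖ ≤ ‖e‖ * ‖a‖ := by
  refine le_of_sq_le_sq ?_ (by positivity)
  calc ‖M.smulA e a‖ ^ 2 = ‖(a†) ⊛ (M.inner e e ⊛ a)‖ := by
        rw [← norm_inner_self, M.inner_smulA_left, M.inner_smulA]
    _ ≤ ‖a†‖ * (‖M.inner e e‖ * ‖a‖) :=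
        (CStarCategory.norm_comp_le _ _).trans
          (mul_le_mul_of_nonneg_left (CStarCategory.norm_comp_le _ _) (norm_nonneg _))
    _ = (‖e‖ * ‖a‖) ^ 2 := by rw [CStarCategory.norm_adj, norm_inner_self]; ring

/-- Reduced to the case of a single fibre through `‖⟪e,f⟫‖² = ‖⟪f, e·⟪e,f⟫⟫‖`. -/
theorem norm_inner_le {y z : Obj} (e : M.carrier z) (f : M.carrier y) :
    ‖M.inner e f‖ ≤ ‖e‖ * ‖f‖ := by
  rcases (norm_nonneg (M.inner e f)).eq_or_lt with h | hpos
  · rw [← h]; positivity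
  refine le_of_mul_le_mul_right ?_ hpos
  calc ‖M.inner e f‖ * ‖M.inner e f‖ = ‖M.inner f (M.smulA e (M.inner e f))‖ := by
        rw [← CStarCategory.norm_adj_comp_self, M.adj_inner, M.inner_smulA]
    _ ≤ ‖f‖ * (‖e‖ * ‖M.inner e f‖) :=
        (M.norm_inner_le_of_same _ _).trans
          (mul_le_mul_of_nonneg_left (M.norm_smulA_le _ _) (norm_nonneg _))
    _ = ‖e‖ * ‖f‖ * ‖M.inner e f‖ := by ring

theorem continuous_inner_left {y z : Obj} (f : M.carrier y) :
    Continuous (fun e : M.carrier z => M.inner e f) :=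
  AddMonoidHomClass.continuous_of_bound (M.innerLeft f) ‖f‖ fun e =>
    (M.norm_inner_le e f).trans_eq (mul_comm _ _)

theorem continuous_inner_right {y z : Obj} (e : M.carrier z) :
    Continuous (fun f : M.carrier y => M.inner e f) :=
  AddMonoidHomClass.continuous_of_bound (M.innerRight e) ‖e‖ (M.norm_inner_le e)

end HilbMod

namespace HilbOp

variable {Obj : Type u} {Hom : Obj → Obj → Type v}
  [∀ x y, NormedAddCommGroup (Hom x y)] [∀ x y, NormedSpace ℂ (Hom x y)]
  [∀ x y, CompleteSpace (Hom x y)] [CStarCategory Hom] {L M N : HilbMod Hom}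

theorem adjoint_prop' (T : HilbOp M N) {y z : Obj} (e : N.carrier z) (f : M.carrier y) :
    N.inner e (T.toFun y f) = M.inner (T.adjFun z e) f :=
  (T.star.adjoint_prop e f).symm

theorem ext_of_toFun {T S : HilbOp M N} (h : ∀ z v, T.toFun z v = S.toFun z v) : T = S :=
  ext' h fun _ _ => M.ext_inner fun u => by rw [← T.adjoint_prop, ← S.adjoint_prop, h]

theorem toFun_add (T : HilbOp M N) {z : Obj} (v v' : M.carrier z) :
    T.toFun z (v + v') = T.toFun z v + T.toFun z v' :=
  N.ext_inner fun u => by simp only [adjoint_prop', N.inner_add_right, M.inner_add_right]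

theorem map_smulA (T : HilbOp M N) {x w : Obj} (m : M.carrier x) (a : Hom w x) :
    T.toFun w (M.smulA m a) = N.smulA (T.toFun x m) a :=
  N.ext_inner fun u => by rw [adjoint_prop', M.inner_smulA, N.inner_smulA, adjoint_prop']

def toAddMonoidHom (T : HilbOp M N) (z : Obj) : M.carrier z →+ N.carrier z :=
  AddMonoidHom.mk' (T.toFun z) T.toFun_add

instance : Sub (HilbOp M N) :=
  ⟨fun T S =>
    { toFun := fun z v => T.toFun z v - S.toFun z v
      adjFun := fun z w => T.adjFun z w - S.adjFun z w
      adjoint_prop := fun e f => by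
        change N.innerLeft f (_ - _) = M.innerRight e (_ - _)
        rw [map_sub, map_sub]
        exact congrArg₂ _ (T.adjoint_prop e f) (S.adjoint_prop e f) }⟩

theorem sub_toFun (T S : HilbOp M N) (z : Obj) (v : M.carrier z) :
    (T - S).toFun z v = T.toFun z v - S.toFun z v :=
  rfl

instance : Monoid (HilbOp M M) where
  mul := comp
  one := id M
  mul_assoc _ _ _ := rfl
  one_mul _ := rfl
  mul_one _ := rfl

theorem sum_toFun {ι : Type*} (s : Finset ι) (T : ι → HilbOp M N) (z : Obj) (v : M.carrier z) :
    (∑ i ∈ s, T i).toFun z v = ∑ i ∈ s, (T i).toFun z v :=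
  map_sum (AddMonoidHom.mk' (fun T : HilbOp M N => T.toFun z v) fun _ _ => rfl) T s

theorem sum_comp {ι : Type*} (s : Finset ι) (T : ι → HilbOp M N) (S : HilbOp L M) :
    (∑ i ∈ s, T i).comp S = ∑ i ∈ s, (T i).comp S :=
  ext_of_toFun fun z v => by
    change (∑ i ∈ s, T i).toFun z (S.toFun z v) = _
    rw [sum_toFun, sum_toFun]
    rfl

def IsBoundedBy (T : HilbOp M N) (C : ℝ) : Prop :=
  ∀ (z : Obj) (v : M.carrier z), ‖T.toFun z v‖ ≤ C * ‖v‖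

namespace IsBoundedBy

variable {T : HilbOp M N} {C : ℝ}

theorem continuous (hT : T.IsBoundedBy C) (z : Obj) : Continuous (T.toFun z) :=
  AddMonoidHomClass.continuous_of_bound (T.toAddMonoidHom z) C (hT z)

theorem star (hT : T.IsBoundedBy C) (hC : 0 ≤ C) : T.star.IsBoundedBy C := fun z w => by
  rcases (norm_nonneg (T.adjFun z w)).eq_or_lt with h | hpos
  · change ‖T.adjFun z w‖ ≤ _
    rw [← h]; positivity
  refine le_of_mul_le_mul_right ?_ hpos
  calc ‖T.adjFun z w‖ * ‖T.adjFun z w‖ = ‖N.inner (T.toFun z (T.adjFun z w)) w‖ := by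
        rw [T.adjoint_prop, M.norm_inner_self, sq]
    _ ≤ C * ‖T.adjFun z w‖ * ‖w‖ :=
        (N.norm_inner_le _ _).trans (mul_le_mul_of_nonneg_right (hT _ _) (norm_nonneg _))
    _ = C * ‖w‖ * ‖T.adjFun z w‖ := by ring

theorem comp {S : HilbOp L M} {D : ℝ} (hT : T.IsBoundedBy C) (hS : S.IsBoundedBy D)
    (hC : 0 ≤ C) : (T.comp S).IsBoundedBy (C * D) := fun z v =>
  calc ‖T.toFun z (S.toFun z v)‖ ≤ C * (D * ‖v‖) :=
        (hT _ _).trans (mul_le_mul_of_nonneg_left (hS _ _) hC)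
    _ = C * D * ‖v‖ := by ring

theorem pow {T : HilbOp M M} (hT : T.IsBoundedBy C) (hC : 0 ≤ C) (k : ℕ) :
    (T ^ k).IsBoundedBy (C ^ k) := by
  induction k with
  | zero => intro z v; simp only [pow_zero, one_mul]; rfl
  | succ k ih => rw [pow_succ', pow_succ']; exact hT.comp ih hC

end IsBoundedBy

theorem exists_hasSum_of_isBoundedBy (T : ℕ → HilbOp M N) {a : ℕ → ℝ} (ha : Summable a)
    (ha0 : ∀ k, 0 ≤ a k) (hT : ∀ k, (T k).IsBoundedBy (a k)) :
    ∃ S : HilbOp M N, ∀ z v, HasSum (fun k => (T k).toFun z v) (S.toFun z v) := by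
  have hsum (z : Obj) (v : M.carrier z) : Summable fun k => (T k).toFun z v :=
    .of_norm_bounded (ha.mul_right ‖v‖) fun k => hT k z v
  have hsum_adj (z : Obj) (w : N.carrier z) : Summable fun k => (T k).adjFun z w :=
    .of_norm_bounded (ha.mul_right ‖w‖) fun k => (hT k).star (ha0 k) z w
  refine ⟨⟨fun z v => ∑' k, (T k).toFun z v, fun z w => ∑' k, (T k).adjFun z w,
    fun {y z} v w => ?_⟩, fun z v => (hsum z v).hasSum⟩
  have h_left := (hsum z v).hasSum.map (N.innerLeft w) (N.continuous_inner_left w)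
  have h_right := (hsum_adj y w).hasSum.map (M.innerRight v) (M.continuous_inner_right v)
  simp only [Function.comp_def, HilbMod.innerLeft_apply, HilbMod.innerRight_apply,
    adjoint_prop] at h_left h_right
  exact h_left.unique h_right

/-- The right inverse is the Neumann series `∑ₖ (id - T)ᵏ`. -/
theorem exists_comp_eq_id_of_isBoundedBy_id_sub (T : HilbOp M M) {c : ℝ} (hc0 : 0 ≤ c)
    (hc1 : c < 1) (hT : (id M - T).IsBoundedBy c) : ∃ S : HilbOp M M, T.comp S = id M := by
  obtain ⟨S, hS⟩ := exists_hasSum_of_isBoundedBy (fun k => (id M - T) ^ k)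
    (summable_geometric_of_lt_one hc0 hc1) (fun k => pow_nonneg hc0 k) (hT.pow hc0)
  refine ⟨S, ext_of_toFun fun z v => ?_⟩
  have h_map : HasSum (fun k => ((id M - T) ^ (k + 1)).toFun z v)
      ((id M - T).toFun z (S.toFun z v)) := by
    simp only [pow_succ']
    exact (hS z v).map ((id M - T).toAddMonoidHom z) (hT.continuous z)
  have h_shift := (hasSum_nat_add_iff' 1).mpr (hS z v)
  simp only [Finset.sum_range_one, pow_zero] at h_shift
  exact sub_right_injective (h_map.unique h_shift)

end HilbOp

section RankOne

variable {Obj : Type u} {Hom : Obj → Obj → Type v}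
  [∀ x y, NormedAddCommGroup (Hom x y)] [∀ x y, NormedSpace ℂ (Hom x y)]
  [∀ x y, CompleteSpace (Hom x y)] [CStarCategory Hom] {L M N : HilbMod Hom}

theorem thetaOp_comp {x : Obj} (f : N.carrier x) (e : M.carrier x) (S : HilbOp L M) :
    (thetaOp f e).comp S = thetaOp f (S.adjFun x e) :=
  HilbOp.ext_of_toFun fun _ v => congrArg (N.smulA f) (S.adjoint_prop' e v)

theorem epsOp_comp_star_epsOp {x : Obj} (f : N.carrier x) (e : M.carrier x) :
    (epsOp f).comp (epsOp e).star = thetaOp f e :=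
  rfl

theorem sum_thetaOp_toFun {ι : Type*} (s : Finset ι) {w : ι → Obj} (f : ∀ i, N.carrier (w i))
    (e : ∀ i, M.carrier (w i)) (z : Obj) (v : M.carrier z) :
    (∑ i ∈ s, thetaOp (f i) (e i)).toFun z v = ∑ i ∈ s, N.smulA (f i) (M.inner (e i) v) :=
  HilbOp.sum_toFun _ _ z v

theorem isCompactOp_sum_thetaOp {n : ℕ} (w : Fin n → Obj) (f : ∀ i, N.carrier (w i))
    (e : ∀ i, M.carrier (w i)) : IsCompactOp (∑ i, thetaOp (f i) (e i)) :=
  fun ε hε => ⟨n, w, f, e, fun z v => by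
    rw [sum_thetaOp_toFun, sub_self, norm_zero]
    positivity⟩

theorem HilbOp.eq_thetaOp_of_unit {x : Obj} (T : HilbOp (repMod Hom x) N) {u : Hom x x}
    (hl : ∀ {y : Obj} (a : Hom y x), u ⊛ a = a) (hr : ∀ {y : Obj} (b : Hom x y), b ⊛ u = b) :
    T = thetaOp (T.toFun x u) u :=
  ext_of_toFun fun z v =>
    calc T.toFun z v = T.toFun z ((repMod Hom x).smulA u v) :=
          congrArg (T.toFun z) (hl v).symm
      _ = N.smulA (T.toFun x u) v := T.map_smulA u v
      _ = N.smulA (T.toFun x u) (u† ⊛ v) := by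
        rw [CStarCategory.adj_eq_self_of_right_unit hr, hl v]

end RankOne

/-- If a right Hilbert `A`-module `E` has compact identity operator,
then `E` is finitely generated projective, i.e. a direct summand (equivalently, a
retract) of a finite direct sum of representable modules `⊕_{i=1}^n h_{x_i}`, the
retraction being given componentwise by operators `U_i : E → h_{x_i}`,
`V_i : h_{x_i} → E` with `∑ V_i ∘ U_i = id_E`.  Conversely, if `A` is unital, every
finitely generated projective module has compact identity. -/
theorem compact_id_iff_fgp {Obj : Type u} {Hom : Obj → Obj → Type v}
    [∀ x y, NormedAddCommGroup (Hom x y)] [∀ x y, NormedSpace ℂ (Hom x y)]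
    [∀ x y, CompleteSpace (Hom x y)] [CStarCategory Hom]
    (E : HilbMod Hom) :
    (IsCompactOp (HilbOp.id E) →
      ∃ (n : ℕ) (x : Fin n → Obj) (U : ∀ i, HilbOp E (repMod Hom (x i)))
        (V : ∀ i, HilbOp (repMod Hom (x i)) E),
        (∑ i, (V i).comp (U i)) = HilbOp.id E) ∧
    (IsUnitalCStarCat Hom →
      (∃ (n : ℕ) (x : Fin n → Obj) (U : ∀ i, HilbOp E (repMod Hom (x i)))
        (V : ∀ i, HilbOp (repMod Hom (x i)) E),
        (∑ i, (V i).comp (U i)) = HilbOp.id E) →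
      IsCompactOp (HilbOp.id E)) := by
  constructor
  · intro hcpt
    obtain ⟨n, w, f, e, happrox⟩ := hcpt (1 / 2) (by norm_num)
    obtain ⟨S, hS⟩ := (∑ i, thetaOp (f i) (e i)).exists_comp_eq_id_of_isBoundedBy_id_sub
      (c := 1 / 2) (by norm_num) (by norm_num) fun z v => by
        rw [HilbOp.sub_toFun, sum_thetaOp_toFun]
        exact happrox z v
    refine ⟨n, w, fun i => (epsOp (S.adjFun (w i) (e i))).star, fun i => epsOp (f i), ?_⟩
    simp only [epsOp_comp_star_epsOp, ← thetaOp_comp, ← HilbOp.sum_comp, hS]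
  · rintro hunital ⟨n, x, U, V, hid⟩
    choose u hl hr using fun i => hunital (x i)
    have h_rank_one : ∀ i, (V i).comp (U i)
        = thetaOp ((V i).toFun (x i) (u i)) ((U i).adjFun (x i) (u i)) := fun i =>
      (congrArg (HilbOp.comp · (U i)) ((V i).eq_thetaOp_of_unit (hl i) (hr i))).trans
        (thetaOp_comp _ _ _)
    rw [← hid, Finset.sum_congr rfl fun i _ => h_rank_one i]
    exact isCompactOp_sum_thetaOp x _ _
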